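/- Pivotality observation: Fix $a \in \mathbb{Z}^d$ and let $u \neq v$ be two distinct neighbors of $a$, and set $t = v + u - a$. Consider site percolation and the event $E'(u,v;\{a\})$ (which entails $u \longleftrightarrow v$ and that there is no pivotal vertex $w$ for the connection with $u \xleftrightarrow{\{a\}} w$). Then on the event that additionally $t = a$ or $t$ is vacant, every occupied connection from $u$ to $v$ forces a path of length at least 4; that is, $E'(u,v;\{a\}) \cap (\{t = a\} \cup \{t \text{ vacant}\}) \subseteq \{u \xrightarrow{4} v\}$. -/

import Mathlib

open MeasureTheory
open scoped ENNReal NNReal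

/-- Vertices of the hypercubic lattice `ℤ^d`. -/
abbrev Vertex (d : ℕ) := Fin d → ℤ

/-- A site-percolation configuration: each vertex is occupied (`true`) or vacant. -/
abbrev Config (d : ℕ) := Vertex d → Bool

/-- The ℓ¹ norm `|x|₁ = ∑ᵢ |xᵢ|`. -/
def dist1 {d : ℕ} (x : Vertex d) : ℕ := ∑ i, (x i).natAbs

/-- Nearest neighbours. -/
def IsNbr {d : ℕ} (x y : Vertex d) : Prop := dist1 (x - y) = 1

/-- `ConnIn ω S l x y`: `x` is connected to `y` by a nearest-neighbour path with at
least `l` edges all of whose internal vertices are occupied in `ω` and lie in `S`. -/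
def ConnIn {d : ℕ} (ω : Config d) (S : Set (Vertex d)) (l : ℕ) (x y : Vertex d) : Prop :=
  x ≠ y ∧ ∃ (k : ℕ) (γ : ℕ → Vertex d), l ≤ k ∧ γ 0 = x ∧ γ k = y ∧
    (∀ i < k, IsNbr (γ i) (γ (i + 1))) ∧
    ∀ i, 0 < i → i < k → (ω (γ i) = true ∧ γ i ∈ S)

/-- `x ⟷ y` : connection by an occupied path. -/
def Conn {d : ℕ} (ω : Config d) (x y : Vertex d) : Prop := ConnIn ω Set.univ 1 x y

/-- `μ` is the law of i.i.d. Bernoulli(`p`) site percolation on `ℤ^d`. -/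
def IsBernoulli (d : ℕ) (p : ℝ) (μ : Measure (Config d)) : Prop :=
  IsProbabilityMeasure μ ∧
  ∀ (s : Finset (Vertex d)) (b : Vertex d → Bool),
    μ {ω | ∀ v ∈ s, ω v = b v} = ∏ v ∈ s, ENNReal.ofReal (if b v then p else 1 - p)

/-- The two-point function `τ_p(x)`. -/
noncomputable def tau {d : ℕ} (μ : Measure (Config d)) (x : Vertex d) : ℝ≥0∞ :=
  μ {ω | Conn ω 0 x}

/-- `τ_p^{(l)}(x)`: probability of a connection using at least `l` edges. -/
noncomputable def tauL {d : ℕ} (μ : Measure (Config d)) (l : ℕ) (x : Vertex d) : ℝ≥0∞ :=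
  μ {ω | ConnIn ω Set.univ l 0 x}

/-- `J(x) = 𝟙{|x|₁ = 1}` (ℝ≥0∞-valued). -/
noncomputable def Jfun {d : ℕ} (x : Vertex d) : ℝ≥0∞ := if dist1 x = 1 then 1 else 0

/-- `m`-fold convolution `J^{*m}` (ℝ≥0∞-valued). -/
noncomputable def Jpow {d : ℕ} : ℕ → Vertex d → ℝ≥0∞
  | 0, x => if x = 0 then 1 else 0
  | m + 1, x => ∑' y, Jfun y * Jpow m (x - y)

/-- `⟨A⟩`: the set `A` together with its nearest neighbours. -/
def thick {d : ℕ} (A : Set (Vertex d)) : Set (Vertex d) :=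
  A ∪ {y | ∃ x ∈ A, IsNbr x y}

/-- `u ⟶^A x`: `u ⟷ x` but every connecting path has an interior vertex in `⟨A⟩`,
or `x ∈ ⟨A⟩`. -/
def ThroughConn {d : ℕ} (ω : Config d) (A : Set (Vertex d)) (u x : Vertex d) : Prop :=
  Conn ω u x ∧ (¬ ConnIn ω (thick A)ᶜ 1 u x ∨ x ∈ thick A)

/-- `w` is pivotal for `{u ⟷ x}`. -/
def Pivotal {d : ℕ} (ω : Config d) (u x w : Vertex d) : Prop :=
  Conn (Function.update ω w true) u x ∧ ¬ Conn (Function.update ω w false) u x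

/-- `E'(v,u;A)`. -/
def Eprime {d : ℕ} (ω : Config d) (v u : Vertex d) (A : Set (Vertex d)) : Prop :=
  ThroughConn ω A v u ∧ ¬ ∃ u', Pivotal ω v u u' ∧ ThroughConn ω A v u'

/-!
Since `a ∈ ⟨{a}⟩` and `u` is adjacent to `a`, we have `u ⟶^{a} a`, so `E'(u,v;{a})` says
that `a` is not pivotal for `u ⟷ v`; as occupying `a` keeps the connection, so does vacating it.
An occupied path from `u` to `v` avoiding `a` has even length by parity and positive length as
`u ≠ v`. Were its length 2, its midpoint would be a common neighbour of `u` and `v` other than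
`a`, i.e. `t = v + u - a`, which is excluded.
-/

open Function

section

variable {d : ℕ}

lemma dist1_neg (x : Vertex d) : dist1 (-x) = dist1 x := by
  simp [dist1]

lemma dist1_add_mod_two (x y : Vertex d) :
    dist1 (x + y) % 2 = (dist1 x + dist1 y) % 2 := by
  rw [dist1, dist1, dist1, Finset.sum_nat_mod, ← Finset.sum_add_distrib,
    Finset.sum_nat_mod _ 2 fun i => (x i).natAbs + (y i).natAbs]
  congr 1
  refine Finset.sum_congr rfl fun i _ => ?_
  rw [Pi.add_apply]
  omega

lemma IsNbr.symm {x y : Vertex d} (h : IsNbr x y) : IsNbr y x := by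
  rwa [IsNbr, ← neg_sub, dist1_neg]

lemma IsNbr.ne {x y : Vertex d} (h : IsNbr x y) : x ≠ y := by
  rintro rfl
  simp [IsNbr, dist1] at h

lemma dist1_sub_mod_two_eq_of_path (γ : ℕ → Vertex d) (k : ℕ)
    (hγ : ∀ i < k, IsNbr (γ i) (γ (i + 1))) : dist1 (γ 0 - γ k) % 2 = k % 2 := by
  induction k with
  | zero => simp [dist1]
  | succ k ih =>
    have := dist1_add_mod_two (γ 0 - γ k) (γ k - γ (k + 1))
    rw [sub_add_sub_cancel, hγ k k.lt_succ_self] at this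
    have := ih fun i hi => hγ i (by omega)
    omega

lemma dist1_sub_mod_two_of_isNbr {a u v : Vertex d} (hu : IsNbr u a) (hv : IsNbr v a) :
    dist1 (u - v) % 2 = 0 := by
  rw [← sub_sub_sub_cancel_right u v a, sub_eq_add_neg, dist1_add_mod_two, dist1_neg]
  rw [IsNbr] at hu hv
  omega

lemma exists_eq_single_of_dist1_eq_one {x : Vertex d} (h : dist1 x = 1) :
    ∃ i s, s.natAbs = 1 ∧ x = Pi.single i s := by
  obtain ⟨i, hi⟩ : ∃ i, x i ≠ 0 := by
    by_contra! hx
    simp [dist1, hx] at h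
  have hsplit := Finset.add_sum_erase _ (fun j => (x j).natAbs) (Finset.mem_univ i)
  rw [← dist1, h] at hsplit
  have hrest : ∀ j ≠ i, x j = 0 := fun j hj => by
    have := Finset.single_le_sum (f := fun j => (x j).natAbs) (fun _ _ => Nat.zero_le _)
      (Finset.mem_erase.mpr ⟨hj, Finset.mem_univ j⟩)
    omega
  refine ⟨i, x i, by omega, funext fun j => ?_⟩
  rcases eq_or_ne j i with rfl | hj
  · simp
  · simp [hj, hrest j hj]

lemma single_add_single_sub_single_eq_single {i j l m : Fin d} {s s' t t' : ℤ}
    (hs : s.natAbs = 1) (hs' : s'.natAbs = 1) (ht : t.natAbs = 1) (ht' : t'.natAbs = 1)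
    (hne : ¬ (i = j ∧ s = s'))
    (h : Pi.single i s + Pi.single l t - Pi.single j s' = (Pi.single m t' : Vertex d)) :
    (l = i ∧ t = -s) ∨ (l = j ∧ t = s') := by
  have hi := congrFun h i
  have hj := congrFun h j
  have hl := congrFun h l
  have hm := congrFun h m
  simp only [Pi.add_apply, Pi.sub_apply, Pi.single_apply] at hi hj hl hm
  grind

lemma eq_zero_or_eq_add_of_dist1_sub_eq_one {x y z : Vertex d} (hx : dist1 x = 1)
    (hy : dist1 y = 1) (hxy : x ≠ y) (hzx : dist1 (z - x) = 1) (hzy : dist1 (z - y) = 1) :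
    z = 0 ∨ z = x + y := by
  obtain ⟨i, s, hs, rfl⟩ := exists_eq_single_of_dist1_eq_one hx
  obtain ⟨j, s', hs', rfl⟩ := exists_eq_single_of_dist1_eq_one hy
  obtain ⟨l, t, ht, hl⟩ := exists_eq_single_of_dist1_eq_one hzx
  obtain ⟨m, t', ht', hm⟩ := exists_eq_single_of_dist1_eq_one hzy
  obtain rfl : z = Pi.single i s + Pi.single l t := by rw [← hl, add_sub_cancel]
  have hne : ¬ (i = j ∧ s = s') := by
    rintro ⟨rfl, rfl⟩
    exact hxy rfl
  rcases single_add_single_sub_single_eq_single hs hs' ht ht' hne hm with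
    ⟨rfl, rfl⟩ | ⟨rfl, rfl⟩
  · exact .inl (by rw [← Pi.single_add, add_neg_cancel, Pi.single_zero])
  · exact .inr rfl

lemma eq_or_eq_add_sub_of_isNbr {a u v w : Vertex d} (hu : IsNbr u a) (hv : IsNbr v a)
    (huv : u ≠ v) (huw : IsNbr u w) (hwv : IsNbr w v) : w = a ∨ w = v + u - a := by
  have hzx : dist1 (w - a - (u - a)) = 1 := by rw [sub_sub_sub_cancel_right]; exact huw.symm
  have hzy : dist1 (w - a - (v - a)) = 1 := by rw [sub_sub_sub_cancel_right]; exact hwv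
  rcases eq_zero_or_eq_add_of_dist1_sub_eq_one hu hv (sub_left_injective.ne huv) hzx hzy
    with h | h
  · exact .inl (sub_eq_zero.mp h)
  · right
    rw [sub_eq_iff_eq_add] at h
    rw [h]
    abel

lemma conn_of_isNbr {x y : Vertex d} (ω : Config d) (h : IsNbr x y) : Conn ω x y := by
  refine ⟨h.ne, 1, fun n => if n = 0 then x else y, le_rfl, rfl, rfl, fun i hi => ?_,
    fun i hi hi' => by omega⟩
  obtain rfl : i = 0 := by omega
  simpa using h

lemma ConnIn.mono {ω ω' : Config d} {S S' : Set (Vertex d)} {l : ℕ} {x y : Vertex d}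
    (h : ConnIn ω S l x y) (hω : ∀ z, ω z = true → ω' z = true) (hS : S ⊆ S') :
    ConnIn ω' S' l x y := by
  obtain ⟨hxy, k, γ, hk, h0, hk', hγ, hint⟩ := h
  exact ⟨hxy, k, γ, hk, h0, hk', hγ, fun i hi hi' =>
    ⟨hω _ (hint i hi hi').1, hS (hint i hi hi').2⟩⟩

lemma ConnIn.of_update_false {ω : Config d} {S : Set (Vertex d)} {l : ℕ} {a x y : Vertex d}
    (h : ConnIn (update ω a false) S l x y) : ConnIn ω (S \ {a}) l x y := by
  obtain ⟨hxy, k, γ, hk, h0, hk', hγ, hint⟩ := h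
  refine ⟨hxy, k, γ, hk, h0, hk', hγ, fun i hi hi' => ?_⟩
  obtain ⟨hocc, hS⟩ := hint i hi hi'
  have ha : γ i ≠ a := by
    rintro rfl
    simp at hocc
  exact ⟨by rwa [update_of_ne ha] at hocc, hS, ha⟩

lemma Eprime.conn_update_false {ω : Config d} {a u v : Vertex d} (hE : Eprime ω u v {a})
    (hu : IsNbr u a) : Conn (update ω a false) u v := by
  by_contra h
  have hocc : Conn (update ω a true) u v :=
    hE.1.1.mono (fun z hz => by by_cases hza : z = a <;> simp [hza, hz]) le_rfl
  exact hE.2 ⟨a, ⟨hocc, h⟩, conn_of_isNbr ω hu, .inr (.inl rfl)⟩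

lemma ConnIn.four_of_notMem {ω : Config d} {S : Set (Vertex d)} {l : ℕ} {a u v : Vertex d}
    (hu : IsNbr u a) (hv : IsNbr v a) (haS : a ∉ S)
    (ht : v + u - a = a ∨ ω (v + u - a) = false) (h : ConnIn ω S l u v) :
    ConnIn ω S 4 u v := by
  obtain ⟨huv, k, γ, -, h0, hk, hγ, hint⟩ := h
  refine ⟨huv, k, γ, ?_, h0, hk, hγ, hint⟩
  have hk_even : k % 2 = 0 := by
    rw [← dist1_sub_mod_two_eq_of_path γ k hγ, h0, hk, dist1_sub_mod_two_of_isNbr hu hv]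
  have hk0 : k ≠ 0 := by
    rintro rfl
    exact huv (h0.symm.trans hk)
  have hk2 : k ≠ 2 := by
    rintro rfl
    obtain ⟨hocc, hmem⟩ := hint 1 one_pos one_lt_two
    have huw : IsNbr u (γ 1) := h0 ▸ hγ 0 two_pos
    have hwv : IsNbr (γ 1) v := hk ▸ hγ 1 one_lt_two
    rcases eq_or_eq_add_sub_of_isNbr hu hv huv huw hwv with hw | hw
    · exact haS (hw ▸ hmem)
    · rcases ht with ht | ht
      · exact haS (ht ▸ hw ▸ hmem)
      · exact absurd (hw ▸ hocc) (by simp [ht])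
  omega

end

theorem pivotality_observation_general (d : ℕ) (a u v : Vertex d)
    (hu : IsNbr u a) (hv : IsNbr v a) (ω : Config d)
    (hE : Eprime ω u v {a}) (ht : v + u - a = a ∨ ω (v + u - a) = false) :
    ConnIn ω Set.univ 4 u v :=
  ((hE.conn_update_false hu).of_update_false.four_of_notMem hu hv (by simp) ht).mono
    (fun _ => id) Set.sdiff_subset

/-- pivotality observation: for neighbours `u ≠ v` of `a` and
`t = v + u - a`, on `E'(u,v;{a})` together with (`t = a` or `t` vacant), the vertices
`u, v` are connected by an occupied path of at least 4 edges. -/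
theorem pivotality_observation (d : ℕ) (a u v : Vertex d)
    (hu : IsNbr u a) (hv : IsNbr v a) (huv : u ≠ v) (ω : Config d)
    (hE : Eprime ω u v {a}) (ht : v + u - a = a ∨ ω (v + u - a) = false) :
    ConnIn ω Set.univ 4 u v :=
  pivotality_observation_general d a u v hu hv ω hE ht
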